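/- There exists a finite rotation-puzzle instance 𝒜 over the three-color tile set T_3 (the WIRE subpuzzle, simulating a vertical wire) with a designated input boundary edge at its bottom and a designated output boundary edge at its top lying directly above the input edge, such that for each color c ∈ {blue, red} the instance 𝒜 has exactly one solution whose color at the input edge is c, and this solution has color c at the output edge. -/

import Mathlib

/-- The three Tantrix colors used in the three-color tile set. -/
inductive Color where
  | red
  | yellow
  | blue
deriving DecidableEq

/-- A tile is its clockwise color sequence: a word of length 6 over the colors,
edges indexed `0, …, 5` clockwise. -/
abbrev Tile := Fin 6 → Color

/-- Cyclic rotation of a tile by `k` steps: edge `i` of the rotated tile carries the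
color of edge `i + k` of the original sequence. -/
def rotTile (k : Fin 6) (t : Tile) : Tile := fun i => t (i + k)

open Color in
/-- The three-color tile set `T₃`, consisting of the 14 color sequences
yrrbby, ryybbr, yrrybb, ryyrbb, brrbyy, yrbybr, rbyryb, brybyr, brbyyr, bybrry,
ryrbby, rbryyb, ybyrrb, yrybbr. -/
def T3 : Set Tile :=
  { ![yellow,red,red,blue,blue,yellow],
    ![red,yellow,yellow,blue,blue,red],
    ![yellow,red,red,yellow,blue,blue],
    ![red,yellow,yellow,red,blue,blue],
    ![blue,red,red,blue,yellow,yellow],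
    ![yellow,red,blue,yellow,blue,red],
    ![red,blue,yellow,red,yellow,blue],
    ![blue,red,yellow,blue,yellow,red],
    ![blue,red,blue,yellow,yellow,red],
    ![blue,yellow,blue,red,red,yellow],
    ![red,yellow,red,blue,blue,yellow],
    ![red,blue,red,yellow,yellow,blue],
    ![yellow,blue,yellow,red,red,blue],
    ![yellow,red,yellow,blue,blue,red] }

/-- The six neighbor offsets of the hexagonal layout of `ℤ²`, listed clockwise
starting from straight up; edge `i` of a tile at `x` is the edge shared with the
neighboring point `x + dirs i`, and opposite directions differ by `3` (mod 6).
Two points are neighbors exactly if their difference is one of these offsets. -/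
def dirs : Fin 6 → ℤ × ℤ := ![(0,1), (1,1), (1,0), (0,-1), (-1,-1), (-1,0)]

/-- A finite rotation-puzzle instance over the tile set `T3`:
a function from a finite set of points of `ℤ²` to `T3`. -/
structure Puzzle where
  tiles : ℤ × ℤ → Option Tile
  finite : {x | tiles x ≠ none}.Finite
  memT3 : ∀ x t, tiles x = some t → t ∈ T3

/-- `sol` is a solution of the instance `P`: it assigns to each occupied point a
cyclic rotation of the tile placed there, such that for every pair of neighboring
occupied points the two assigned sequences give the same color to their joint edge
(edge `d` of the tile at `x` is glued to edge `d + 3` of the tile at `x + dirs d`). -/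
def IsSolution (P : Puzzle) (sol : ℤ × ℤ → Option Tile) : Prop :=
  (∀ x, (P.tiles x = none → sol x = none) ∧
    (∀ t, P.tiles x = some t → ∃ k : Fin 6, sol x = some (rotTile k t))) ∧
  (∀ (x : ℤ × ℤ) (d : Fin 6) (s s' : Tile),
    sol x = some s → sol (x + dirs d) = some s' → s d = s' (d + 3))

/-- `(x, d)` is a boundary edge of `P`: the point `x` is occupied and its
neighbor in direction `d` is not. -/
def IsBoundary (P : Puzzle) (x : ℤ × ℤ) (d : Fin 6) : Prop :=
  P.tiles x ≠ none ∧ P.tiles (x + dirs d) = none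

/-- The solution `sol` has color `c` at the edge in direction `d` of the tile at `x`. -/
def SolColor (sol : ℤ × ℤ → Option Tile) (x : ℤ × ℤ) (d : Fin 6) (c : Color) : Prop :=
  ∃ s, sol x = some s ∧ s d = c

/-!
The wire consists of three tiles: bybrry at `(0, 0)`, yrrbby directly above it at `(0, 1)`,
and rbryyb at `(1, 1)`, which touches both. Solutions of a puzzle on a finite set are exactly
the tile rotations that agree along the joint edges, and for the wire the three joint edges
leave just four rotation triples. Their input colors are r, y, b, y and their output colors
r, r, b, b, so a blue or red input singles out one solution and reappears at the output.
-/

namespace Puzzle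

variable {S : Finset (ℤ × ℤ)} {A : ℤ × ℤ → Tile}

def ofFinset (S : Finset (ℤ × ℤ)) (A : ℤ × ℤ → Tile) (hA : ∀ x ∈ S, A x ∈ T3) : Puzzle where
  tiles x := if x ∈ S then some (A x) else none
  finite := S.finite_toSet.subset fun x hx => by_contra fun h => hx (if_neg h)
  memT3 x t h := by
    split_ifs at h with hx
    cases h
    exact hA x hx

theorem isBoundary_ofFinset {hA : ∀ x ∈ S, A x ∈ T3} {x : ℤ × ℤ} {d : Fin 6} :
    IsBoundary (ofFinset S A hA) x d ↔ x ∈ S ∧ x + dirs d ∉ S := by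
  simp [IsBoundary, ofFinset]

def rotAssign (S : Finset (ℤ × ℤ)) (A : ℤ × ℤ → Tile) (k : ℤ × ℤ → Fin 6) :
    ℤ × ℤ → Option Tile :=
  fun x => if x ∈ S then some (rotTile (k x) (A x)) else none

def EdgesMatch (S : Finset (ℤ × ℤ)) (A : ℤ × ℤ → Tile) (k : ℤ × ℤ → Fin 6) : Prop :=
  ∀ x ∈ S, ∀ d, x + dirs d ∈ S →
    rotTile (k x) (A x) d = rotTile (k (x + dirs d)) (A (x + dirs d)) (d + 3)

theorem isSolution_ofFinset_iff {hA : ∀ x ∈ S, A x ∈ T3} {sol : ℤ × ℤ → Option Tile} :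
    IsSolution (ofFinset S A hA) sol ↔ ∃ k, EdgesMatch S A k ∧ sol = rotAssign S A k := by
  constructor
  · rintro ⟨hrot, hmatch⟩
    have : ∀ x, ∃ k : Fin 6, x ∈ S → sol x = some (rotTile k (A x)) := fun x => by
      by_cases hx : x ∈ S
      · obtain ⟨k, hk⟩ := (hrot x).2 (A x) (if_pos hx)
        exact ⟨k, fun _ => hk⟩
      · exact ⟨0, fun h => absurd h hx⟩
    choose k hk using this
    have hsol : sol = rotAssign S A k := funext fun x => by
      by_cases hx : x ∈ S
      · simp [rotAssign, hx, hk x hx]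
      · simp [rotAssign, hx, (hrot x).1 (if_neg hx)]
    refine ⟨k, fun x hx d hxd => hmatch x d _ _ (hk x hx) (hk _ hxd), hsol⟩
  · rintro ⟨k, hk, rfl⟩
    refine ⟨fun x => ⟨fun hx => ?_, fun t ht => ?_⟩, fun x d s s' hs hs' => ?_⟩
    · simp_all [ofFinset, rotAssign]
    · simp only [ofFinset, Option.ite_none_right_eq_some, Option.some.injEq] at ht
      exact ⟨k x, by simp [rotAssign, ht.1, ← ht.2]⟩
    · simp only [rotAssign, Option.ite_none_right_eq_some, Option.some.injEq] at hs hs'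
      rw [← hs.2, ← hs'.2]
      exact hk x hs.1 d hs'.1

theorem solColor_rotAssign {k : ℤ × ℤ → Fin 6} {x : ℤ × ℤ} (hx : x ∈ S) {d : Fin 6}
    {c : Color} : SolColor (rotAssign S A k) x d c ↔ rotTile (k x) (A x) d = c := by
  simp [SolColor, rotAssign, hx]

theorem rotAssign_congr {k k' : ℤ × ℤ → Fin 6} (h : ∀ x ∈ S, k x = k' x) :
    rotAssign S A k = rotAssign S A k' :=
  funext fun x => by by_cases hx : x ∈ S <;> simp [rotAssign, hx, h]

theorem existsUnique_solution_ofFinset {hA : ∀ x ∈ S, A x ∈ T3} {xIn xOut : ℤ × ℤ} {dIn dOut : Fin 6} {c : Color}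
    (hIn : xIn ∈ S) (hOut : xOut ∈ S) {k : ℤ × ℤ → Fin 6} (hk : EdgesMatch S A k)
    (hkIn : rotTile (k xIn) (A xIn) dIn = c) (hkOut : rotTile (k xOut) (A xOut) dOut = c)
    (huniq : ∀ k', EdgesMatch S A k' → rotTile (k' xIn) (A xIn) dIn = c → ∀ x ∈ S, k' x = k x) :
    ∃ sol, (IsSolution (ofFinset S A hA) sol ∧ SolColor sol xIn dIn c ∧
        SolColor sol xOut dOut c) ∧
      ∀ sol', IsSolution (ofFinset S A hA) sol' → SolColor sol' xIn dIn c → sol' = sol := by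
  refine ⟨rotAssign S A k, ⟨isSolution_ofFinset_iff.2 ⟨k, hk, rfl⟩,
    (solColor_rotAssign hIn).2 hkIn, (solColor_rotAssign hOut).2 hkOut⟩, fun sol' hsol' hc' => ?_⟩
  obtain ⟨k', hk', rfl⟩ := isSolution_ofFinset_iff.1 hsol'
  exact rotAssign_congr (huniq k' hk' ((solColor_rotAssign hIn).1 hc'))

end Puzzle

open Puzzle

open Color in
def wireTile (x : ℤ × ℤ) : Tile :=
  if x = (0, 0) then ![blue, yellow, blue, red, red, yellow]
  else if x = (0, 1) then ![yellow, red, red, blue, blue, yellow]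
  else ![red, blue, red, yellow, yellow, blue]

def wireSites : Finset (ℤ × ℤ) := {(0, 0), (0, 1), (1, 1)}

theorem wireTile_mem_T3 (x : ℤ × ℤ) : wireTile x ∈ T3 := by
  unfold wireTile
  split_ifs <;> simp only [T3, Set.mem_insert_iff, Set.mem_singleton_iff] <;> decide

def wirePuzzle : Puzzle := ofFinset wireSites wireTile fun x _ => wireTile_mem_T3 x

/-- The admissible rotations of the tiles at `(0, 0)`, `(0, 1)` and `(1, 1)`. -/
def wireStates : Finset (Fin 6 × Fin 6 × Fin 6) := {(0, 1, 0), (2, 1, 2), (3, 4, 4), (4, 4, 5)}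

def wireInput (s : Fin 6 × Fin 6 × Fin 6) : Color := rotTile s.1 (wireTile (0, 0)) 3

def wireOutput (s : Fin 6 × Fin 6 × Fin 6) : Color := rotTile s.2.1 (wireTile (0, 1)) 0

theorem edgesMatch_wire_iff (k : ℤ × ℤ → Fin 6) :
    EdgesMatch wireSites wireTile k ↔ (k (0, 0), k (0, 1), k (1, 1)) ∈ wireStates := by
  simp only [EdgesMatch, wireSites, dirs, forall_eq_or_imp, forall_eq, Fin.forall_fin_succ,
    IsEmpty.forall_iff, Finset.mem_insert, Finset.mem_singleton, Prod.mk_add_mk, Prod.mk.injEq,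
    Matrix.cons_val, Fin.reduceSucc, Int.reduceAdd, reduceCtorEq, one_ne_zero, zero_ne_one,
    OfNat.ofNat_ne_zero, OfNat.ofNat_ne_one, true_and, and_true, and_self, or_true, or_self]
  generalize k (0, 0) = a, k (0, 1) = b, k (1, 1) = c
  revert a b c
  decide

theorem wireState_eq_of_wireInput_eq : ∀ s ∈ wireStates, ∀ s' ∈ wireStates,
    wireInput s = wireInput s' → wireInput s ≠ .yellow → s = s' := by
  decide +kernel

theorem wireOutput_eq_wireInput : ∀ s ∈ wireStates, wireInput s ≠ .yellow →
    wireOutput s = wireInput s := by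
  decide +kernel

theorem exists_wireState_wireInput_eq {c : Color} (hc : c ≠ .yellow) :
    ∃ s ∈ wireStates, wireInput s = c := by
  cases c <;> first | exact absurd rfl hc | decide

theorem wire_rotation_of_input {c : Color} (hc : c ≠ .yellow) :
    ∃ k, EdgesMatch wireSites wireTile k ∧ rotTile (k (0, 0)) (wireTile (0, 0)) 3 = c ∧
      rotTile (k (0, 1)) (wireTile (0, 1)) 0 = c ∧
      ∀ k', EdgesMatch wireSites wireTile k' → rotTile (k' (0, 0)) (wireTile (0, 0)) 3 = c →
        ∀ x ∈ wireSites, k' x = k x := by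
  obtain ⟨⟨a, b, e⟩, hs, hin⟩ := exists_wireState_wireInput_eq hc
  let k : ℤ × ℤ → Fin 6 := fun x => if x = (0, 0) then a else if x = (0, 1) then b else e
  refine ⟨k, (edgesMatch_wire_iff k).2 hs, hin,
    (wireOutput_eq_wireInput _ hs (hin ▸ hc)).trans hin, fun k' hk' hin' => ?_⟩
  have := wireState_eq_of_wireInput_eq _ ((edgesMatch_wire_iff k').1 hk') _ hs
    (hin'.trans hin.symm) fun h => hc (hin'.symm.trans h)
  simp_all [wireSites, k]

/-- the three-color WIRE subpuzzle: input boundary edge at the bottom, output boundary edge at the top directly above it; for each color `c ∈ {blue, red}` there is exactly one solution with color `c` at the input edge, and it has color `c` at the output edge. -/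
theorem three_color_WIRE_subpuzzle :
    ∃ (P : Puzzle) (xIn xOut : ℤ × ℤ),
      IsBoundary P xIn 3 ∧ IsBoundary P xOut 0 ∧
      xOut.1 = xIn.1 ∧ xIn.2 < xOut.2 ∧
      ∀ c ∈ ({Color.blue, Color.red} : Set Color),
        ∃ sol : ℤ × ℤ → Option Tile,
          (IsSolution P sol ∧ SolColor sol xIn 3 c ∧ SolColor sol xOut 0 c) ∧
          (∀ sol' : ℤ × ℤ → Option Tile,
            IsSolution P sol' → SolColor sol' xIn 3 c → sol' = sol) := by
  refine ⟨wirePuzzle, (0, 0), (0, 1), isBoundary_ofFinset.2 (by decide),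
    isBoundary_ofFinset.2 (by decide), rfl, by norm_num, fun c hc => ?_⟩
  have hc : c ≠ .yellow := by rcases hc with rfl | rfl <;> decide
  obtain ⟨k, hk, hin, hout, huniq⟩ := wire_rotation_of_input hc
  exact existsUnique_solution_ofFinset (by decide) (by decide) hk hin hout huniq
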